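/- arXiv:math/0506177 — 3 statements merged into one kernel-verified Lean document; each statement's English description precedes it below -/
import Mathlib

section
/- Let A be an n×n max-plus matrix with λ(A) = 0. Then A⊙A*_{·j} = A*_{·j} (the j-th column of A* is an eigenvector of A with eigenvalue 0) if and only if j belongs to the index set of some critical cyclic permutation, i.e., some cycle through j whose average weight equals 0. -/
/-!
Applying `A` to the `j`-th column of `A* = I ⊕ A⁺` gives the `j`-th column of
`A⁺ = A ⊕ A² ⊕ ⋯`, so that column is an eigenvector exactly when `A⁺ j j ≥ 0`. The entry
`(Aᵐ) i z` is the maximal weight of a walk of length `m` from `i` to `z`, and a closed walk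
through `j` splits into elementary cycles, one of them through `j`; since no cycle has positive
weight, `A⁺ j j` is the largest weight of an elementary cycle through `j`.
-/

namespace MaxPlus

/-- Max-plus (tropical) matrix product over `EReal` (`⊥ = -∞` is the max-plus zero,
`+` is the max-plus multiplication, `⊔`/`⨆` is the max-plus addition). -/
noncomputable def mmul {n : ℕ} (A B : Matrix (Fin n) (Fin n) EReal) : Matrix (Fin n) (Fin n) EReal :=
  fun i j => ⨆ k, A i k + B k j

/-- The max-plus identity matrix. -/
noncomputable def mId (n : ℕ) : Matrix (Fin n) (Fin n) EReal := fun i j => if i = j then 0 else ⊥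

/-- Max-plus matrix powers. -/
noncomputable def mpow {n : ℕ} (A : Matrix (Fin n) (Fin n) EReal) : ℕ → Matrix (Fin n) (Fin n) EReal
  | 0 => mId n
  | m + 1 => mmul (mpow A m) A

/-- The max-plus Kleene star `A* = I ⊕ A ⊕ A² ⊕ ⋯` (entrywise supremum of all powers). -/
noncomputable def mstar {n : ℕ} (A : Matrix (Fin n) (Fin n) EReal) : Matrix (Fin n) (Fin n) EReal :=
  fun i j => ⨆ m, mpow A m i j

/-- Weight of the cycle determined by the list `l = [i₁,…,i_k]`,
namely `A i₁ i₂ + ⋯ + A i_k i₁`. -/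
noncomputable def cycleWeight {n : ℕ} (A : Matrix (Fin n) (Fin n) EReal) (l : List (Fin n)) : EReal :=
  ((l.zip (l.rotate 1)).map fun p => A p.1 p.2).sum

/-- A nonempty list of pairwise distinct indices, representing an elementary cycle. -/
def IsCycle {n : ℕ} (l : List (Fin n)) : Prop := l ≠ [] ∧ l.Nodup

/-- All elementary cycles have nonpositive weight, i.e. the maximal cycle mean `λ(A) ≤ 0`. -/
def CycleBound {n : ℕ} (A : Matrix (Fin n) (Fin n) EReal) : Prop :=
  ∀ l : List (Fin n), IsCycle l → cycleWeight A l ≤ 0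

/-- A definite matrix: maximal cycle mean `0` and zero (max-plus unit) diagonal.
(The diagonal entries give cycles of weight `0`, so `λ(A) = 0` is equivalent to
`CycleBound A` here.) -/
def Definite {n : ℕ} (A : Matrix (Fin n) (Fin n) EReal) : Prop :=
  CycleBound A ∧ ∀ i, A i i = 0

/-- Max-plus action of a matrix on a vector: `(A ⊙ x)_i = max_j (A_{ij} + x_j)`. -/
noncomputable def mapVec {n : ℕ} (A : Matrix (Fin n) (Fin n) EReal) (x : Fin n → EReal) :
    Fin n → EReal :=
  fun i => ⨆ j, A i j + x j

/-- The max-plus eigenspace of `A` for the eigenvalue `0`. -/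
def eig {n : ℕ} (A : Matrix (Fin n) (Fin n) EReal) : Set (Fin n → EReal) :=
  {x | mapVec A x = x}

/-- The max-plus column span of a matrix. -/
def mspan {n : ℕ} (A : Matrix (Fin n) (Fin n) EReal) : Set (Fin n → EReal) :=
  {y | ∃ α : Fin n → EReal, y = fun i => ⨆ j, α j + A i j}


end MaxPlus

namespace EReal

theorem add_iSup {ι : Sort*} (a : EReal) (f : ι → EReal) : a + ⨆ i, f i = ⨆ i, a + f i :=
  le_antisymm
    (add_le_of_forall_lt fun a' ha' b' hb' => by
      obtain ⟨i, hi⟩ := lt_iSup_iff.1 hb'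
      exact (add_le_add ha'.le hi.le).trans (le_iSup (a + f ·) i))
    (iSup_le fun i => add_le_add le_rfl (le_iSup f i))

theorem iSup_add {ι : Sort*} (f : ι → EReal) (a : EReal) : (⨆ i, f i) + a = ⨆ i, f i + a := by
  simp only [add_comm _ a, add_iSup]

end EReal

namespace List

variable {α : Type*}

theorem exists_isRotated_cons_of_mem {l : List α} {a : α} (h : a ∈ l) : ∃ t, l ~r a :: t := by
  obtain ⟨p, t, rfl⟩ := append_of_mem h
  exact ⟨t ++ p, p.length, by simp [rotate_append_length_eq]⟩

theorem exists_isRotated_splice_of_not_nodup {l : List α} (h : ¬l.Nodup) :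
    ∃ a q r, l ~r a :: (q ++ a :: r) := by
  classical
  obtain ⟨a, ha⟩ := exists_duplicate_iff_not_nodup.2 h
  obtain ⟨t, hrot⟩ := exists_isRotated_cons_of_mem ha.mem
  have hat : a ∈ t := by
    have h2 := duplicate_iff_two_le_count.1 ha
    rw [hrot.perm.count_eq, count_cons_self] at h2
    exact count_pos_iff.1 (by omega)
  obtain ⟨q, r, rfl⟩ := append_of_mem hat
  exact ⟨a, q, r, hrot⟩

end List

namespace MaxPlus

variable {n : ℕ}

theorem mmul_mId (A : Matrix (Fin n) (Fin n) EReal) : mmul A (mId n) = A := by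
  funext i j
  refine le_antisymm (iSup_le fun k => ?_) (le_iSup_of_le j (by simp [mId]))
  by_cases h : k = j <;> simp [mId, h]

theorem mId_mmul (A : Matrix (Fin n) (Fin n) EReal) : mmul (mId n) A = A := by
  funext i j
  refine le_antisymm (iSup_le fun k => ?_) (le_iSup_of_le i (by simp [mId]))
  by_cases h : i = k <;> simp [mId, h]

theorem mmul_assoc (A B C : Matrix (Fin n) (Fin n) EReal) :
    mmul (mmul A B) C = mmul A (mmul B C) := by
  funext i j
  simp only [mmul, EReal.iSup_add, EReal.add_iSup, add_assoc]
  exact iSup_comm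

theorem mpow_succ' (A : Matrix (Fin n) (Fin n) EReal) (m : ℕ) :
    mpow A (m + 1) = mmul A (mpow A m) := by
  induction m with
  | zero => exact (mId_mmul A).trans (mmul_mId A).symm
  | succ m ih => rw [mpow, ih, mmul_assoc, ← ih]; rfl

/-- The weight of the walk `i → k₁ → ⋯ → kₘ`, which ends at `[k₁, …, kₘ].getLastD i`. -/
noncomputable def walkWeight (A : Matrix (Fin n) (Fin n) EReal) (i : Fin n) :
    List (Fin n) → EReal
  | [] => 0
  | k :: l => A i k + walkWeight A k l

theorem walkWeight_append (A : Matrix (Fin n) (Fin n) EReal) (i : Fin n) (l₁ l₂ : List (Fin n)) :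
    walkWeight A i (l₁ ++ l₂) = walkWeight A i l₁ + walkWeight A (l₁.getLastD i) l₂ := by
  induction l₁ generalizing i with
  | nil => simp [walkWeight]
  | cons k l ih => simp only [List.cons_append, walkWeight, ih, List.getLastD_cons, add_assoc]

theorem mpow_eq_iSup_walkWeight (A : Matrix (Fin n) (Fin n) EReal) (m : ℕ) (i z : Fin n) :
    mpow A m i z =
      ⨆ (l : List (Fin n)) (_ : l.length = m) (_ : l.getLastD i = z), walkWeight A i l := by
  induction m generalizing i with
  | zero =>
    refine le_antisymm ?_ (iSup₂_le fun l hl => iSup_le fun hz => ?_)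
    · by_cases h : i = z
      · subst h
        exact le_iSup₂_of_le [] rfl (le_iSup_of_le rfl (by simp [mpow, mId, walkWeight]))
      · simp [mpow, mId, h]
    · obtain rfl := List.length_eq_zero_iff.1 hl
      subst hz
      simp [mpow, mId, walkWeight]
  | succ m ih =>
    rw [mpow_succ']
    refine le_antisymm ?_ (iSup₂_le fun l hl => iSup_le fun hz => ?_)
    · simp only [mmul, ih, EReal.add_iSup]
      refine iSup_le fun k => iSup₂_le fun l hl => iSup_le fun hz => ?_
      exact le_iSup₂_of_le (k :: l) (by simp [hl])
        (le_iSup_of_le (by rwa [List.getLastD_cons]) le_rfl)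
    · obtain ⟨k, l, rfl⟩ := List.exists_cons_of_length_eq_add_one hl
      refine le_iSup_of_le k (add_le_add le_rfl ?_)
      rw [ih]
      exact le_iSup₂_of_le l (by simpa using hl)
        (le_iSup_of_le (by rwa [List.getLastD_cons] at hz) le_rfl)

/-- The max-plus matrix `A⁺ = A ⊕ A² ⊕ ⋯`. -/
noncomputable def mplus (A : Matrix (Fin n) (Fin n) EReal) : Matrix (Fin n) (Fin n) EReal :=
  fun i j => ⨆ m, mpow A (m + 1) i j

theorem mstar_eq_mId_sup_mplus (A : Matrix (Fin n) (Fin n) EReal) (i j : Fin n) :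
    mstar A i j = mId n i j ⊔ mplus A i j :=
  (sup_iSup_nat_succ fun m => mpow A m i j).symm

theorem mapVec_mstar_col (A : Matrix (Fin n) (Fin n) EReal) (j : Fin n) :
    mapVec A (fun i => mstar A i j) = fun i => mplus A i j := by
  funext i
  simp only [mapVec, mstar, mplus, mpow_succ', mmul, EReal.add_iSup]
  exact iSup_comm

theorem cycleWeight_rotate (A : Matrix (Fin n) (Fin n) EReal) (l : List (Fin n)) (k : ℕ) :
    cycleWeight A (l.rotate k) = cycleWeight A l := by
  unfold cycleWeight
  rw [List.rotate_rotate, add_comm, ← List.rotate_rotate, List.zip_eq_zipWith,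
    List.zip_eq_zipWith, ← List.zipWith_rotate_distrib _ _ _ _ (List.length_rotate ..).symm,
    List.map_rotate, (List.rotate_perm _ _).sum_eq]

theorem cycleWeight_eq_of_isRotated (A : Matrix (Fin n) (Fin n) EReal) {l l' : List (Fin n)}
    (h : l ~r l') : cycleWeight A l = cycleWeight A l' := by
  obtain ⟨k, rfl⟩ := h
  exact (cycleWeight_rotate A l k).symm

theorem cycleWeight_cons (A : Matrix (Fin n) (Fin n) EReal) (i : Fin n) (t : List (Fin n)) :
    cycleWeight A (i :: t) = walkWeight A i (t ++ [i]) := by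
  suffices h : ∀ k, (((k :: t).zip (t ++ [i])).map fun p => A p.1 p.2).sum
      = walkWeight A k (t ++ [i]) by
    simpa [cycleWeight] using h i
  induction t with
  | nil => simp [walkWeight]
  | cons x t ih => intro k; simp [walkWeight, ih]

theorem cycleWeight_splice (A : Matrix (Fin n) (Fin n) EReal) (a : Fin n) (q r : List (Fin n)) :
    cycleWeight A (a :: (q ++ a :: r)) = cycleWeight A (a :: q) + cycleWeight A (a :: r) := by
  rw [cycleWeight_cons, cycleWeight_cons, cycleWeight_cons,
    show q ++ a :: r ++ [a] = (q ++ [a]) ++ (r ++ [a]) by simp, walkWeight_append,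
    List.getLastD_concat]

/-- Cutting a closed walk into elementary cycles: under `CycleBound A` every piece not through
`i` has nonpositive weight, so the piece through `i` is at least as heavy as the walk. -/
theorem exists_isCycle_mem_cycleWeight_le (A : Matrix (Fin n) (Fin n) EReal) (hb : CycleBound A)
    (l : List (Fin n)) (i : Fin n) (hi : i ∈ l) :
    ∃ c, IsCycle c ∧ i ∈ c ∧ cycleWeight A l ≤ cycleWeight A c := by
  by_cases hnd : l.Nodup
  · exact ⟨l, ⟨List.ne_nil_of_mem hi, hnd⟩, hi, le_rfl⟩
  obtain ⟨a, q, r, hrot⟩ := List.exists_isRotated_splice_of_not_nodup hnd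
  have hlen : l.length = q.length + r.length + 2 := by
    have := hrot.perm.length_eq
    simp at this
    omega
  have hsplit := cycleWeight_splice A a q r
  rw [← cycleWeight_eq_of_isRotated A hrot] at hsplit
  obtain ⟨u, v, hiu, hw, hu, hv⟩ : ∃ u v, i ∈ u ∧
      cycleWeight A l = cycleWeight A u + cycleWeight A (a :: v) ∧
      u.length < l.length ∧ v.length + 1 < l.length := by
    have hi' : i ∈ a :: q ∨ i ∈ a :: r := by
      have := hrot.mem_iff.1 hi
      simp at this ⊢
      tauto
    rcases hi' with hq | hr
    · exact ⟨a :: q, r, hq, hsplit, by simp; omega, by omega⟩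
    · exact ⟨a :: r, q, hr, by rw [hsplit, add_comm], by simp; omega, by omega⟩
  obtain ⟨c, hc, hic, hle⟩ := exists_isCycle_mem_cycleWeight_le A hb u i hiu
  obtain ⟨c', hc', -, hle'⟩ :=
    exists_isCycle_mem_cycleWeight_le A hb (a :: v) a List.mem_cons_self
  refine ⟨c, hc, hic, ?_⟩
  calc cycleWeight A l = cycleWeight A u + cycleWeight A (a :: v) := hw
    _ ≤ cycleWeight A c + 0 := add_le_add hle (hle'.trans (hb c' hc'))
    _ = cycleWeight A c := add_zero _
termination_by l.length

theorem exists_isCycle_mem_forall_cycleWeight_le (A : Matrix (Fin n) (Fin n) EReal) (j : Fin n) :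
    ∃ c₀, IsCycle c₀ ∧ j ∈ c₀ ∧
      ∀ c, IsCycle c → j ∈ c → cycleWeight A c ≤ cycleWeight A c₀ := by
  have hfin : {c : List (Fin n) | IsCycle c ∧ j ∈ c}.Finite :=
    (List.finite_length_le (Fin n) n).subset fun c hc => by
      simpa using hc.1.2.length_le_card
  obtain ⟨c₀, ⟨hc₀, hj⟩, hmax⟩ := Set.exists_max_image _ (cycleWeight A) hfin
    ⟨[j], ⟨List.cons_ne_nil _ _, List.nodup_singleton j⟩, List.mem_singleton_self j⟩
  exact ⟨c₀, hc₀, hj, fun c hc hjc => hmax c ⟨hc, hjc⟩⟩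

theorem exists_isCycle_mem_mplus_le (A : Matrix (Fin n) (Fin n) EReal) (hb : CycleBound A)
    (j : Fin n) : ∃ c, IsCycle c ∧ j ∈ c ∧ mplus A j j ≤ cycleWeight A c := by
  obtain ⟨c₀, hc₀, hj, hmax⟩ := exists_isCycle_mem_forall_cycleWeight_le A j
  refine ⟨c₀, hc₀, hj, iSup_le fun m => ?_⟩
  rw [mpow_eq_iSup_walkWeight]
  refine iSup₂_le fun l hl => iSup_le fun hz => ?_
  obtain ⟨t, rfl⟩ : ∃ t, l = t ++ [j] := by
    rcases List.eq_nil_or_concat l with rfl | ⟨t, b, rfl⟩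
    · simp at hl
    · rw [List.concat_eq_append, List.getLastD_concat] at hz
      exact ⟨t, by rw [List.concat_eq_append, hz]⟩
  obtain ⟨c, hc, hjc, hle⟩ :=
    exists_isCycle_mem_cycleWeight_le A hb (j :: t) j List.mem_cons_self
  rw [← cycleWeight_cons]
  exact hle.trans (hmax c hc hjc)

theorem cycleWeight_le_mplus (A : Matrix (Fin n) (Fin n) EReal) {l : List (Fin n)} {j : Fin n}
    (hj : j ∈ l) : cycleWeight A l ≤ mplus A j j := by
  obtain ⟨t, hrot⟩ := List.exists_isRotated_cons_of_mem hj
  rw [cycleWeight_eq_of_isRotated A hrot, cycleWeight_cons]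
  refine le_iSup_of_le t.length ?_
  rw [mpow_eq_iSup_walkWeight]
  exact le_iSup₂_of_le (t ++ [j]) (by simp) (le_iSup_of_le (List.getLastD_concat ..) le_rfl)

theorem column_eigenvector_iff_critical_general {n : ℕ} (A : Matrix (Fin n) (Fin n) EReal)
    (hb : CycleBound A) (j : Fin n) :
    mapVec A (fun i => mstar A i j) = (fun i => mstar A i j) ↔
      ∃ l : List (Fin n), IsCycle l ∧ cycleWeight A l = 0 ∧ j ∈ l := by
  rw [mapVec_mstar_col]
  constructor
  · intro h
    obtain ⟨c, hc, hjc, hle⟩ := exists_isCycle_mem_mplus_le A hb j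
    have h0 : 0 ≤ mplus A j j := by
      rw [congrFun h j, mstar_eq_mId_sup_mplus]
      simp [mId]
    exact ⟨c, hc, le_antisymm (hb c hc) (h0.trans hle), hjc⟩
  · rintro ⟨l, -, hl, hjl⟩
    have h0 : 0 ≤ mplus A j j := hl ▸ cycleWeight_le_mplus A hjl
    funext i
    rw [mstar_eq_mId_sup_mplus]
    by_cases hij : i = j
    · subst hij
      simp [mId, h0]
    · simp [mId, hij]

/-- For a matrix with `λ(A) = 0`, the `j`-th column of `A*` is an eigenvector of `A`
(for the eigenvalue `0`) iff `j` lies on some critical cycle, i.e. some cycle through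
`j` of weight (equivalently, average weight) `0`. -/
theorem column_eigenvector_iff_critical {n : ℕ} (A : Matrix (Fin n) (Fin n) EReal)
    (hA : ∀ i j, A i j ≠ ⊤) (hb : CycleBound A)
    (h0 : ∃ l : List (Fin n), IsCycle l ∧ cycleWeight A l = 0) (j : Fin n) :
    mapVec A (fun i => mstar A i j) = (fun i => mstar A i j) ↔
      ∃ l : List (Fin n), IsCycle l ∧ cycleWeight A l = 0 ∧ j ∈ l :=
  column_eigenvector_iff_critical_general A hb j

end MaxPlus
end

section
/- If A is a definite max-plus matrix, then its eigenspace for eigenvalue 0 equals the column span of its Kleene star: eig(A) = span(A*). -/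
namespace MaxPlus

/-!
An eigenvector `x = A ⊙ x` is fixed by every power of `A`, hence by `A*`, so it lies in the span
of `A*`. Conversely, for `y = A* ⊙ α` we get `A ⊙ y = ⨆_{m ≥ 1} A^m ⊙ α ≤ y`, while the zero
diagonal gives `y ≤ A ⊙ y`.
-/

theorem _root_.EReal.add_iSup_s10 {ι : Sort*} (a : EReal) (f : ι → EReal) :
    a + ⨆ i, f i = ⨆ i, a + f i := by
  refine le_antisymm ?_ (iSup_le fun i => add_le_add_right (le_iSup f i) a)
  induction a using EReal.rec with
  | bot => simp
  | top =>
    rcases eq_or_ne (⨆ i, f i) ⊥ with h | h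
    · simp [h]
    · obtain ⟨i, hi⟩ : ∃ i, f i ≠ ⊥ := by simpa [iSup_eq_bot] using h
      calc ⊤ + ⨆ i, f i ≤ ⊤ := le_top
        _ = ⊤ + f i := (EReal.top_add_of_ne_bot hi).symm
        _ ≤ ⨆ i, ⊤ + f i := le_iSup (fun i => ⊤ + f i) i
  | coe a =>
    have adj : ∀ b c : EReal, b + a ≤ c ↔ b ≤ c - a := fun b c =>
      (EReal.le_sub_iff_add_le (.inl (EReal.coe_ne_bot a)) (.inl (EReal.coe_ne_top a))).symm
    rw [add_comm, adj]
    exact iSup_le fun i => (adj _ _).1 (add_comm (f i) a ▸ le_iSup (fun i => (a : EReal) + f i) i)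

theorem _root_.EReal.iSup_add_s10 {ι : Sort*} (f : ι → EReal) (a : EReal) :
    (⨆ i, f i) + a = ⨆ i, f i + a := by
  simp only [add_comm _ a, EReal.add_iSup_s10]

section

variable {n : ℕ}

theorem mspan_eq_range (B : Matrix (Fin n) (Fin n) EReal) : mspan B = Set.range (mapVec B) := by
  ext y
  exact exists_congr fun α => by simp only [add_comm]; exact eq_comm

theorem mapVec_mId (x : Fin n → EReal) : mapVec (mId n) x = x := by
  funext i
  refine le_antisymm (iSup_le fun j => ?_) (le_iSup_of_le i (by simp [mId]))
  by_cases h : i = j <;> simp [mId, h]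

theorem mapVec_mmul (B C : Matrix (Fin n) (Fin n) EReal) (x : Fin n → EReal) :
    mapVec (mmul B C) x = mapVec B (mapVec C x) := by
  funext i
  simp only [mapVec, mmul, EReal.iSup_add_s10, EReal.add_iSup_s10, add_assoc]
  exact iSup_comm

theorem mapVec_iSup {ι : Sort*} (A : Matrix (Fin n) (Fin n) EReal) (f : ι → Fin n → EReal) :
    mapVec A (⨆ m, f m) = ⨆ m, mapVec A (f m) := by
  funext i
  simp only [mapVec, iSup_apply, EReal.add_iSup_s10]
  exact iSup_comm

theorem mapVec_mpow_succ' (A : Matrix (Fin n) (Fin n) EReal) (m : ℕ) (x : Fin n → EReal) :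
    mapVec (mpow A (m + 1)) x = mapVec A (mapVec (mpow A m) x) := by
  induction m generalizing x with
  | zero => simp only [mpow, mapVec_mmul, mapVec_mId]
  | succ m ih => rw [mpow, mapVec_mmul, ih, mpow, mapVec_mmul]

theorem mapVec_mstar (A : Matrix (Fin n) (Fin n) EReal) (x : Fin n → EReal) :
    mapVec (mstar A) x = ⨆ m, mapVec (mpow A m) x := by
  funext i
  simp only [mapVec, mstar, iSup_apply, EReal.iSup_add_s10]
  exact iSup_comm

theorem le_mapVec_of_diag_eq_zero {A : Matrix (Fin n) (Fin n) EReal} (hA : ∀ i, A i i = 0)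
    (x : Fin n → EReal) : x ≤ mapVec A x := fun i =>
  le_iSup_of_le i (by rw [hA, zero_add])

theorem mapVec_mpow_of_mem_eig {A : Matrix (Fin n) (Fin n) EReal} {x : Fin n → EReal}
    (hx : x ∈ eig A) (m : ℕ) : mapVec (mpow A m) x = x := by
  induction m with
  | zero => exact mapVec_mId x
  | succ m ih => rw [mpow, mapVec_mmul, hx, ih]

theorem mapVec_mstar_of_mem_eig {A : Matrix (Fin n) (Fin n) EReal} {x : Fin n → EReal}
    (hx : x ∈ eig A) : mapVec (mstar A) x = x := by
  simp only [mapVec_mstar, mapVec_mpow_of_mem_eig hx, iSup_const]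

theorem mapVec_mstar_mem_eig {A : Matrix (Fin n) (Fin n) EReal} (hA : ∀ i, A i i = 0)
    (x : Fin n → EReal) : mapVec (mstar A) x ∈ eig A := by
  change mapVec A (mapVec (mstar A) x) = mapVec (mstar A) x
  rw [mapVec_mstar, mapVec_iSup]
  refine le_antisymm (iSup_le fun m => ?_) (iSup_mono fun m => le_mapVec_of_diag_eq_zero hA _)
  rw [← mapVec_mpow_succ']
  exact le_iSup (fun m => mapVec (mpow A m) x) (m + 1)

end

/-- For a definite matrix, the eigenspace for the eigenvalue `0` is the max-plus column
span of its Kleene star: `eig(A) = span(A*)`. -/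
theorem eig_eq_span_mstar {n : ℕ} (A : Matrix (Fin n) (Fin n) EReal)
    (hd : Definite A) :
    eig A = mspan (mstar A) := by
  rw [mspan_eq_range]
  ext x
  constructor
  · intro hx
    exact ⟨x, mapVec_mstar_of_mem_eig hx⟩
  · rintro ⟨α, rfl⟩
    exact mapVec_mstar_mem_eig hd.2 α

end MaxPlus
end

section
/- Let A be any n×n max-plus matrix with finite permanent (at least one permutation σ with all A_{iσ(i)} finite). Then the Kleene stars of all definite forms of A coincide: if σ and ρ are two maximal permutations of A with corresponding definite forms A'_{ij} = A_{iσ(j)} - A_{jσ(j)} and A''_{ij} = A_{iρ(j)} - A_{jρ(j)}, then (A')* = (A'')*. -/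
/-!
Let `σ, ρ` be maximal permutations, `A'`, `A''` the corresponding definite forms and
`τ = ρ⁻¹σ`. Column `b` of `A'` is column `τ b` of `A''` shifted by the real number
`d b = A (τ b) (ρ (τ b)) - A b (σ b)`, and the edge `k → τ k` of `A''` has weight `-d k`.
On a `τ`-cycle, `σ` may be replaced by `ρ` to give another permutation, so maximality of `σ`
makes the sum of `d` over every `τ`-cycle nonpositive. Walking in `A''` around the cycle from
`τ b` back to `b` therefore has weight at least `d b`, whence `A' ≤ A''*` entrywise, and
`A'* ≤ A''*` because `A''*` is transitively closed with nonnegative diagonal. By symmetry the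
two closures are equal.
-/

namespace MaxPlus

lemma _root_.EReal.coe_finset_sum {ι : Type*} (s : Finset ι) (f : ι → ℝ) :
    ((∑ i ∈ s, f i : ℝ) : EReal) = ∑ i ∈ s, (f i : EReal) :=
  map_sum (⟨⟨Real.toEReal, EReal.coe_zero⟩, EReal.coe_add⟩ : ℝ →+ EReal) f s

lemma _root_.EReal.sub_eq_sub_add_coe_sub (x : EReal) (r s : ℝ) :
    x - r = (x - s) + ((s - r : ℝ) : EReal) := by
  rw [sub_eq_add_neg, sub_eq_add_neg, add_assoc, ← EReal.coe_neg, ← EReal.coe_neg,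
    ← EReal.coe_add]
  congr 2
  ring

lemma _root_.Function.sum_range_minimalPeriod_iterate_succ {α M : Type*} [AddCommMonoid M]
    (g : α → α) (x : α) (f : α → M) :
    ∑ t ∈ Finset.range (Function.minimalPeriod g x), f (g^[t + 1] x) =
      ∑ t ∈ Finset.range (Function.minimalPeriod g x), f (g^[t] x) := by
  rcases hℓ : Function.minimalPeriod g x with _ | m
  · rfl
  · rw [Finset.sum_range_succ, Finset.sum_range_succ' (fun t => f (g^[t] x)), ← hℓ,
      Function.iterate_minimalPeriod, Function.iterate_zero_apply]

lemma _root_.Equiv.Perm.image_image_iterate_range_minimalPeriod {α : Type*} [Finite α]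
    [DecidableEq α] (τ : Equiv.Perm α) (b : α) :
    ((Finset.range (Function.minimalPeriod τ b)).image (τ^[·] b)).image τ =
      (Finset.range (Function.minimalPeriod τ b)).image (τ^[·] b) := by
  refine Finset.eq_of_subset_of_card_le ?_ (Finset.card_image_of_injective _ τ.injective).ge
  simp only [Finset.subset_iff, Finset.mem_image, Finset.mem_range]
  rintro _ ⟨_, ⟨t, -, rfl⟩, rfl⟩
  have hℓ := Function.minimalPeriod_pos_of_mem_periodicPts (τ.injective.mem_periodicPts b)
  refine ⟨(t + 1) % Function.minimalPeriod τ b, Nat.mod_lt _ hℓ, ?_⟩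
  rw [Function.iterate_mod_minimalPeriod_eq, Function.iterate_succ_apply']

lemma _root_.Equiv.Perm.exists_eq_ite {α : Type*} [Finite α] [DecidableEq α]
    {σ ρ : Equiv.Perm α} {C : Finset α} (hC : C.image ρ = C.image σ) :
    ∃ π : Equiv.Perm α, ∀ i, π i = if i ∈ C then ρ i else σ i := by
  have hinj : Function.Injective fun i => if i ∈ C then ρ i else σ i := by
    intro x y h
    by_cases hx : x ∈ C <;> by_cases hy : y ∈ C <;> simp only [hx, hy, if_true, if_false] at h
    · exact ρ.injective h
    · obtain ⟨z, hz, hzx⟩ := Finset.mem_image.mp (hC ▸ Finset.mem_image_of_mem ρ hx)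
      exact absurd (σ.injective (hzx.trans h) ▸ hz) hy
    · obtain ⟨z, hz, hzy⟩ := Finset.mem_image.mp (hC ▸ Finset.mem_image_of_mem ρ hy)
      exact absurd (σ.injective (hzy.trans h.symm) ▸ hz) hx
    · exact σ.injective h
  exact ⟨Equiv.ofBijective _ (Finite.injective_iff_bijective.mp hinj), fun _ => rfl⟩

section KleeneStar

variable {n : ℕ} (B : Matrix (Fin n) (Fin n) EReal)

lemma mpow_le_mstar (m : ℕ) (i j : Fin n) : mpow B m i j ≤ mstar B i j :=
  le_iSup (fun m => mpow B m i j) m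

lemma zero_le_mstar_self (i : Fin n) : 0 ≤ mstar B i i := by
  simpa [mpow, mId] using mpow_le_mstar B 0 i i

lemma le_mstar (i j : Fin n) : B i j ≤ mstar B i j := by
  have h : mId n i i + B i j ≤ mpow B 1 i j := le_iSup (fun k => mId n i k + B k j) i
  simpa [mId] using h.trans (mpow_le_mstar B 1 i j)

lemma mpow_add_le (a b : ℕ) (i k j : Fin n) :
    mpow B a i k + mpow B b k j ≤ mpow B (a + b) i j := by
  have : Nonempty (Fin n) := ⟨i⟩
  induction b generalizing j with
  | zero => by_cases h : k = j <;> simp [mpow, mId, h]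
  | succ b ih =>
    obtain ⟨l, hl⟩ := exists_eq_ciSup_of_finite (f := fun l => mpow B b k l + B l j)
    calc mpow B a i k + mpow B (b + 1) k j = mpow B a i k + mpow B b k l + B l j := by
          rw [add_assoc, mpow, mmul, ← hl]
      _ ≤ mpow B (a + b) i l + B l j := add_le_add_left (ih l) _
      _ ≤ mpow B (a + b + 1) i j := le_iSup (fun l => mpow B (a + b) i l + B l j) l

lemma mstar_add_le (i k j : Fin n) : mstar B i k + mstar B k j ≤ mstar B i j := by
  refine EReal.add_le_of_forall_lt fun x hx y hy => ?_
  obtain ⟨a, ha⟩ := lt_iSup_iff.mp hx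
  obtain ⟨b, hb⟩ := lt_iSup_iff.mp hy
  calc x + y ≤ mpow B a i k + mpow B b k j := add_le_add ha.le hb.le
    _ ≤ mpow B (a + b) i j := mpow_add_le B a b i k j
    _ ≤ mstar B i j := mpow_le_mstar B _ i j

lemma mstar_le_mstar_of_le_mstar {C : Matrix (Fin n) (Fin n) EReal}
    (h : ∀ i j, C i j ≤ mstar B i j) (i j : Fin n) : mstar C i j ≤ mstar B i j := by
  refine iSup_le fun m => ?_
  induction m generalizing j with
  | zero =>
    by_cases hij : i = j
    · subst hij; simpa [mpow, mId] using zero_le_mstar_self B i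
    · simp [mpow, mId, hij]
  | succ m ih =>
    refine iSup_le fun k => ?_
    exact (add_le_add (ih k) (h k j)).trans (mstar_add_le B i k j)

lemma sum_le_mpow (p : ℕ → Fin n) (m : ℕ) :
    ∑ t ∈ Finset.range m, B (p t) (p (t + 1)) ≤ mpow B m (p 0) (p m) := by
  induction m with
  | zero => simp [mpow, mId]
  | succ m ih =>
    rw [Finset.sum_range_succ]
    exact (add_le_add_left ih _).trans
      (le_iSup (fun k => mpow B m (p 0) k + B k (p (m + 1))) (p m))

lemma coe_sum_iterate_sub_le_mstar (τ : Equiv.Perm (Fin n)) (w : Fin n → ℝ)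
    (hw : ∀ k, (w k : EReal) ≤ B k (τ k)) (b : Fin n) :
    ((∑ t ∈ Finset.range (Function.minimalPeriod τ b), w (τ^[t] b) - w b : ℝ) : EReal) ≤
      mstar B (τ b) b := by
  obtain ⟨m, hm⟩ := Nat.exists_eq_add_one.mpr
    (Function.minimalPeriod_pos_of_mem_periodicPts (τ.injective.mem_periodicPts b))
  have hend : τ^[m + 1] b = b := hm ▸ Function.iterate_minimalPeriod
  calc ((∑ t ∈ Finset.range (Function.minimalPeriod τ b), w (τ^[t] b) - w b : ℝ) : EReal)
      = ∑ t ∈ Finset.range m, (w (τ^[t + 1] b) : EReal) := by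
        rw [hm, Finset.sum_range_succ', Function.iterate_zero_apply, add_sub_cancel_right,
          EReal.coe_finset_sum]
    _ ≤ ∑ t ∈ Finset.range m, B (τ^[t + 1] b) (τ^[t + 1 + 1] b) :=
        Finset.sum_le_sum fun t _ => by rw [Function.iterate_succ_apply' τ (t + 1)]; exact hw _
    _ ≤ mpow B m (τ b) (τ^[m + 1] b) := sum_le_mpow B (fun t => τ^[t + 1] b) m
    _ = mpow B m (τ b) b := by rw [hend]
    _ ≤ mstar B (τ b) b := mpow_le_mstar B m _ _

end KleeneStar

def IsMaximalPerm {n : ℕ} (A : Matrix (Fin n) (Fin n) EReal) (σ : Equiv.Perm (Fin n)) : Prop :=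
  ∀ π : Equiv.Perm (Fin n), ∑ i, A i (π i) ≤ ∑ i, A i (σ i)

noncomputable def definiteForm {n : ℕ} (A : Matrix (Fin n) (Fin n) EReal)
    (σ : Equiv.Perm (Fin n)) : Matrix (Fin n) (Fin n) EReal :=
  fun i j => A i (σ j) - A j (σ j)

section MaximalPerm

variable {n : ℕ} {A : Matrix (Fin n) (Fin n) EReal} {σ ρ : Equiv.Perm (Fin n)}

lemma IsMaximalPerm.apply_ne_bot (hσ : IsMaximalPerm A σ)
    (hfin : ∃ π : Equiv.Perm (Fin n), ∀ i, A i (π i) ≠ ⊥) (i : Fin n) : A i (σ i) ≠ ⊥ := by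
  obtain ⟨π, hπ⟩ := hfin
  have hπsum : ∑ i, A i (π i) ≠ ⊥ := WithBot.sum_eq_bot_iff.not.mpr fun ⟨i, _, h⟩ => hπ i h
  exact fun h => ne_bot_of_le_ne_bot hπsum (hσ π)
    (WithBot.sum_eq_bot_iff.mpr ⟨i, Finset.mem_univ i, h⟩)

variable {r s : Fin n → ℝ}

lemma IsMaximalPerm.sum_le_sum_of_image_eq (hσ : IsMaximalPerm A σ) (hr : ∀ i, A i (σ i) = r i)
    (hs : ∀ i, A i (ρ i) = s i) {C : Finset (Fin n)} (hC : C.image ρ = C.image σ) :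
    ∑ i ∈ C, s i ≤ ∑ i ∈ C, r i := by
  obtain ⟨π, hπ⟩ := Equiv.Perm.exists_eq_ite hC
  have hπsum : ∑ i, A i (π i) = ((∑ i, (r i + if i ∈ C then s i - r i else 0) : ℝ) : EReal) := by
    rw [EReal.coe_finset_sum]
    refine Finset.sum_congr rfl fun i _ => ?_
    rw [hπ]
    split_ifs
    · rw [hs, add_sub_cancel]
    · rw [hr, add_zero]
  have hσsum : ∑ i, A i (σ i) = ((∑ i, r i : ℝ) : EReal) := by
    rw [EReal.coe_finset_sum]
    exact Finset.sum_congr rfl fun i _ => hr i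
  have h := hσ π
  rw [hπsum, hσsum, EReal.coe_le_coe_iff, Finset.sum_add_distrib, Finset.sum_ite_mem,
    Finset.univ_inter, Finset.sum_sub_distrib] at h
  linarith

lemma IsMaximalPerm.sum_iterate_le_sum_iterate (hσ : IsMaximalPerm A σ)
    (hr : ∀ i, A i (σ i) = r i) (hs : ∀ i, A i (ρ i) = s i) (b : Fin n) :
    ∑ t ∈ Finset.range (Function.minimalPeriod (ρ⁻¹ * σ) b), s ((ρ⁻¹ * σ)^[t] b) ≤
      ∑ t ∈ Finset.range (Function.minimalPeriod (ρ⁻¹ * σ) b), r ((ρ⁻¹ * σ)^[t] b) := by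
  set τ := ρ⁻¹ * σ
  set C := (Finset.range (Function.minimalPeriod τ b)).image (τ^[·] b)
  have hinj : Set.InjOn (τ^[·] b) (Finset.range (Function.minimalPeriod τ b)) :=
    fun _ hx _ hy => Function.iterate_injOn_Iio_minimalPeriod (Finset.mem_range.mp hx)
      (Finset.mem_range.mp hy)
  have hC : C.image ρ = C.image σ := by
    have hCτ : C.image τ = C := Equiv.Perm.image_image_iterate_range_minimalPeriod τ b
    have hρτ : (⇑ρ ∘ ⇑τ) = σ := funext fun k => ρ.apply_symm_apply (σ k)
    conv_lhs => rw [← hCτ, Finset.image_image, hρτ]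
  rw [← Finset.sum_image (f := s) hinj, ← Finset.sum_image (f := r) hinj]
  exact hσ.sum_le_sum_of_image_eq hr hs hC

theorem IsMaximalPerm.mstar_definiteForm_le (hσ : IsMaximalPerm A σ)
    (hr : ∀ i, A i (σ i) = r i) (hs : ∀ i, A i (ρ i) = s i) (i j : Fin n) :
    mstar (definiteForm A σ) i j ≤ mstar (definiteForm A ρ) i j := by
  set τ := ρ⁻¹ * σ
  have hρτ : ∀ k, ρ (τ k) = σ k := fun k => ρ.apply_symm_apply (σ k)
  set d : Fin n → ℝ := fun k => s (τ k) - r k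
  have hfactor : ∀ a b, definiteForm A σ a b = definiteForm A ρ a (τ b) + d b := fun a b => by
    change A a (σ b) - A b (σ b) = (A a (ρ (τ b)) - A (τ b) (ρ (τ b))) + _
    rw [hs, hρτ, hr]
    exact EReal.sub_eq_sub_add_coe_sub _ _ _
  have hedge : ∀ k, ((-d k : ℝ) : EReal) ≤ definiteForm A ρ k (τ k) := fun k => by
    change _ ≤ A k (ρ (τ k)) - A (τ k) (ρ (τ k))
    rw [hs, hρτ, hr, neg_sub, EReal.coe_sub]
  have hd : ∀ b, (d b : EReal) ≤ mstar (definiteForm A ρ) (τ b) b := fun b => by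
    refine le_trans ?_ (coe_sum_iterate_sub_le_mstar _ τ (fun k => -d k) hedge b)
    have hcycle : ∑ t ∈ Finset.range (Function.minimalPeriod τ b), s (τ (τ^[t] b)) ≤
        ∑ t ∈ Finset.range (Function.minimalPeriod τ b), r (τ^[t] b) := by
      simp only [← Function.iterate_succ_apply' τ]
      rw [Function.sum_range_minimalPeriod_iterate_succ τ b s]
      exact hσ.sum_iterate_le_sum_iterate hr hs b
    simp only [d, Finset.sum_neg_distrib, Finset.sum_sub_distrib, EReal.coe_le_coe_iff]
    linarith
  refine mstar_le_mstar_of_le_mstar _ (fun a b => ?_) i j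
  calc definiteForm A σ a b = definiteForm A ρ a (τ b) + d b := hfactor a b
    _ ≤ mstar (definiteForm A ρ) a (τ b) + mstar (definiteForm A ρ) (τ b) b :=
        add_le_add (le_mstar _ a (τ b)) (hd b)
    _ ≤ mstar (definiteForm A ρ) a b := mstar_add_le _ a (τ b) b

end MaximalPerm

/-- For a matrix with finite permanent, the Kleene stars of all of its definite forms
coincide: for any two maximal permutations `σ, ρ`, the closures of the corresponding
definite forms are equal (the "definite closure" of `A`). -/
theorem definite_closure_well_defined {n : ℕ} (A : Matrix (Fin n) (Fin n) EReal)
    (hA : ∀ i j, A i j ≠ ⊤)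
    (hfin : ∃ π : Equiv.Perm (Fin n), ∀ i, A i (π i) ≠ ⊥)
    (σ ρ : Equiv.Perm (Fin n))
    (hσ : ∀ π : Equiv.Perm (Fin n), (∑ i, A i (π i)) ≤ ∑ i, A i (σ i))
    (hρ : ∀ π : Equiv.Perm (Fin n), (∑ i, A i (π i)) ≤ ∑ i, A i (ρ i)) :
    mstar (fun i j => A i (σ j) - A j (σ j)) =
      mstar (fun i j => A i (ρ j) - A j (ρ j)) := by
  have hσreal : ∀ i, A i (σ i) = ((A i (σ i)).toReal : EReal) := fun i =>
    (EReal.coe_toReal (hA _ _) (IsMaximalPerm.apply_ne_bot hσ hfin i)).symm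
  have hρreal : ∀ i, A i (ρ i) = ((A i (ρ i)).toReal : EReal) := fun i =>
    (EReal.coe_toReal (hA _ _) (IsMaximalPerm.apply_ne_bot hρ hfin i)).symm
  funext i j
  exact le_antisymm (IsMaximalPerm.mstar_definiteForm_le hσ hσreal hρreal i j)
    (IsMaximalPerm.mstar_definiteForm_le hρ hρreal hσreal i j)

end MaxPlus
end
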